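/- arXiv:2010.06154 — 2 statements merged into one kernel-verified Lean document; each statement's English description precedes it below -/
import Mathlib

section
/- Let x be a test point and x' a point at Euclidean distance D from x in R^{n_2}, with n_2 ≥ 2. If v is a uniformly random unit vector in R^{n_2} and τ = o(D), then the probability that the ray {x + tv : t ≥ 0} passes within distance τ of x' is at most (c·τ/D)^{n_2 − 1} for an absolute constant c > 0. -/
/-! If the ray from `x` in the unit direction `v` passes within `τ` of `x'`, then
`‖D • v - (x' - x)‖ ≤ 2τ`, so every point of the unit ball with direction `v` lies within `2τ/D`
of the line `ℝ ∙ (x' - x)`: the directions in question fill a cylinder of half-length `1` and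
radius `2τ/D` around that line. Via the orthogonal decomposition `E ≃ K × Kᗮ` a cylinder is a
product of balls, so its volume scales like `h ^ dim K * b ^ dim Kᗮ`; comparing with the cylinder
of half-length and radius `1/2`, which fits in the unit ball, gives the bound with `c = 8`. -/

open MeasureTheory Metric
open scoped ENNReal

/-- Cone (surface) measure on the unit sphere of `ℝ^n`; normalized it gives the uniform
distribution of a random unit direction. -/
noncomputable def coneMeasure (n : ℕ) (A : Set (EuclideanSpace ℝ (Fin n))) : ℝ≥0∞ :=
  n * volume {x : EuclideanSpace ℝ (Fin n) | x ∈ ball 0 1 ∧ x ≠ 0 ∧ (‖x‖⁻¹ • x) ∈ A}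

open Module

theorem norm_norm_smul_sub_le_of_norm_smul_sub_le {F : Type*} [NormedAddCommGroup F]
    [NormedSpace ℝ F] {v d : F} {t τ : ℝ} (hv : ‖v‖ = 1) (ht : 0 ≤ t)
    (h : ‖t • v - d‖ ≤ τ) : ‖‖d‖ • v - d‖ ≤ 2 * τ := by
  have htd : |‖d‖ - t| ≤ τ := by
    have := abs_norm_sub_norm_le (t • v) d
    rw [norm_smul, hv, mul_one, Real.norm_of_nonneg ht, abs_sub_comm] at this
    exact this.trans h
  calc ‖‖d‖ • v - d‖ = ‖(‖d‖ - t) • v + (t • v - d)‖ := by rw [sub_smul, sub_add_sub_cancel]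
    _ ≤ |‖d‖ - t| + ‖t • v - d‖ := by
      simpa [norm_smul, hv] using norm_add_le ((‖d‖ - t) • v) (t • v - d)
    _ ≤ 2 * τ := by linarith

variable {E : Type*} [NormedAddCommGroup E] [InnerProductSpace ℝ E]

namespace Submodule

variable (K : Submodule ℝ E) [K.HasOrthogonalProjection]

def cylinder (h b : ℝ) : Set E :=
  {w | ‖K.orthogonalProjectionOnto w‖ ≤ h ∧ ‖Kᗮ.orthogonalProjectionOnto w‖ ≤ b}

theorem norm_orthogonalProjectionOnto_orthogonal_le {w k : E} (hk : k ∈ K) :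
    ‖Kᗮ.orthogonalProjectionOnto w‖ ≤ ‖w - k‖ := by
  rw [orthogonalProjectionOnto_orthogonal, coe_norm, starProjection_minimal]
  exact ciInf_le ⟨0, by rintro _ ⟨y, rfl⟩; positivity⟩ (⟨k, hk⟩ : K)

theorem cylinder_subset_ball {h b : ℝ} (hhb : h ^ 2 + b ^ 2 < 1) :
    K.cylinder h b ⊆ ball 0 1 := by
  rintro w ⟨hP, hQ⟩
  have hw := norm_sq_eq_add_norm_sq_projection w K
  have hP2 := pow_le_pow_left₀ (norm_nonneg _) hP 2
  have hQ2 := pow_le_pow_left₀ (norm_nonneg _) hQ 2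
  rw [mem_ball_zero_iff, ← sq_lt_one_iff₀ (norm_nonneg w)]
  linarith

theorem volume_cylinder [FiniteDimensional ℝ E] [MeasurableSpace E] [BorelSpace E] (h b : ℝ) :
    volume (K.cylinder h b) = volume (closedBall (0 : K) h) * volume (closedBall (0 : Kᗮ) b) := by
  have hdecomp : MeasurePreserving (fun w => WithLp.ofLp (K.orthogonalDecomposition w)) :=
    (WithLp.volume_preserving_ofLp K Kᗮ).comp K.orthogonalDecomposition.measurePreserving
  have hpre : K.cylinder h b = (fun w => WithLp.ofLp (K.orthogonalDecomposition w)) ⁻¹'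
      (closedBall 0 h ×ˢ closedBall 0 b) := by
    ext w
    simp [cylinder]
  rw [hpre, hdecomp.measure_preimage
      (measurableSet_closedBall.prod measurableSet_closedBall).nullMeasurableSet,
    Measure.volume_eq_prod, Measure.prod_prod]

theorem volume_cylinder_mul [FiniteDimensional ℝ E] [MeasurableSpace E] [BorelSpace E]
    {s t h b : ℝ} (hs : 0 ≤ s) (ht : 0 ≤ t) (hh : 0 ≤ h) (hb : 0 ≤ b) :
    volume (K.cylinder (s * h) (t * b)) =
      ENNReal.ofReal (s ^ finrank ℝ K * t ^ finrank ℝ Kᗮ) * volume (K.cylinder h b) := by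
  simp only [volume_cylinder, Measure.addHaar_closedBall _ _ hh, Measure.addHaar_closedBall _ _ hb,
    Measure.addHaar_closedBall _ _ (mul_nonneg hs hh),
    Measure.addHaar_closedBall _ _ (mul_nonneg ht hb), mul_pow,
    ENNReal.ofReal_mul (pow_nonneg hs _), ENNReal.ofReal_mul (pow_nonneg ht _)]
  ring

end Submodule

theorem subset_cylinder_of_ray_near {x x' : E} (hxx' : x ≠ x') (τ : ℝ) :
    {w : E | w ∈ ball 0 1 ∧ w ≠ 0 ∧
        ‖w‖⁻¹ • w ∈ {v : E | ∃ t : ℝ, 0 ≤ t ∧ dist (x + t • v) x' ≤ τ}} ⊆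
      (ℝ ∙ (x' - x)).cylinder 1 (2 * τ / dist x x') := by
  rintro w ⟨hw1, hw0, t, ht, hray⟩
  rw [mem_ball_zero_iff] at hw1
  have hray' : ‖t • (‖w‖⁻¹ • w) - (x' - x)‖ ≤ τ := by
    rwa [dist_eq_norm, add_sub_assoc, add_comm, sub_add] at hray
  have hd : 0 < ‖x' - x‖ := norm_pos_iff.2 (sub_ne_zero.2 hxx'.symm)
  rw [dist_comm, dist_eq_norm]
  generalize x' - x = d at hray' hd ⊢
  have hnear : ‖‖d‖ • (‖w‖⁻¹ • w) - d‖ ≤ 2 * τ :=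
    norm_norm_smul_sub_le_of_norm_smul_sub_le (norm_smul_inv_norm hw0) ht hray'
  refine ⟨(Submodule.norm_orthogonalProjectionOnto_apply_le _ w).trans hw1.le, ?_⟩
  have hk : (‖w‖ / ‖d‖) • d ∈ ℝ ∙ d := Submodule.smul_mem _ _ (Submodule.mem_span_singleton_self d)
  have hw : w - (‖w‖ / ‖d‖) • d = (‖w‖ / ‖d‖) • (‖d‖ • (‖w‖⁻¹ • w) - d) := by
    rw [smul_sub, smul_smul, smul_smul, div_mul_cancel₀ _ hd.ne',
      mul_inv_cancel₀ (norm_ne_zero_iff.2 hw0), one_smul]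
  calc ‖(ℝ ∙ d)ᗮ.orthogonalProjectionOnto w‖ ≤ ‖w - (‖w‖ / ‖d‖) • d‖ :=
        (ℝ ∙ d).norm_orthogonalProjectionOnto_orthogonal_le hk
    _ = ‖w‖ / ‖d‖ * ‖‖d‖ • (‖w‖⁻¹ • w) - d‖ := by
        rw [hw, norm_smul, Real.norm_of_nonneg (by positivity)]
    _ ≤ 1 / ‖d‖ * (2 * τ) := by gcongr
    _ = 2 * τ / ‖d‖ := by ring

theorem volume_cylinder_span_singleton_le [FiniteDimensional ℝ E] [MeasurableSpace E]
    [BorelSpace E] {d : E} (hd : d ≠ 0) {r : ℝ} (hr : 0 ≤ r) :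
    volume ((ℝ ∙ d).cylinder 1 r) ≤
      ENNReal.ofReal (2 * (2 * r) ^ (finrank ℝ E - 1)) * volume (ball (0 : E) 1) := by
  have hK : finrank ℝ (ℝ ∙ d) = 1 := finrank_span_singleton hd
  have hKperp : finrank ℝ (ℝ ∙ d)ᗮ = finrank ℝ E - 1 := by
    have := (ℝ ∙ d).finrank_add_finrank_orthogonal
    omega
  calc volume ((ℝ ∙ d).cylinder 1 r)
      = volume ((ℝ ∙ d).cylinder (2 * (1 / 2)) (2 * r * (1 / 2))) := by
        rw [show (2 : ℝ) * (1 / 2) = 1 by norm_num, show 2 * r * (1 / 2) = r by ring]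
    _ = ENNReal.ofReal (2 ^ 1 * (2 * r) ^ (finrank ℝ E - 1)) *
          volume ((ℝ ∙ d).cylinder (1 / 2) (1 / 2)) := by
        rw [Submodule.volume_cylinder_mul _ (by norm_num) (by positivity) (by norm_num)
          (by norm_num), hK, hKperp]
    _ ≤ ENNReal.ofReal (2 * (2 * r) ^ (finrank ℝ E - 1)) * volume (ball (0 : E) 1) := by
        rw [pow_one]
        gcongr
        exact (ℝ ∙ d).cylinder_subset_ball (by norm_num)

theorem coneMeasure_univ (n : ℕ) :
    coneMeasure n Set.univ = n * volume (ball (0 : EuclideanSpace ℝ (Fin n)) 1) := by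
  rcases n with _ | n
  · simp [coneMeasure]
  have hset : {w : EuclideanSpace ℝ (Fin (n + 1)) | w ∈ ball 0 1 ∧ w ≠ 0 ∧ ‖w‖⁻¹ • w ∈ Set.univ}
      = ball 0 1 \ {0} := by
    ext w
    simp [and_comm]
  rw [coneMeasure, hset, measure_sdiff_null (measure_singleton 0)]

/-- There is an absolute constant `c > 0` such that for points `x, x'` at distance `D` in
`ℝ^{n₂}` (`n₂ ≥ 2`) and `τ = o(D)` (formalized as `τ ≤ D/2`), the probability that the ray
from `x` in a uniformly random direction `v` passes within distance `τ` of `x'` is at most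
`(c τ / D)^{n₂ - 1}`. -/
theorem random_ray_hits_ball_prob :
    ∃ c : ℝ, 0 < c ∧ ∀ (n₂ : ℕ), 2 ≤ n₂ →
      ∀ (x x' : EuclideanSpace ℝ (Fin n₂)) (τ D : ℝ), 0 < τ → τ ≤ D / 2 →
        dist x x' = D →
        coneMeasure n₂ {v : EuclideanSpace ℝ (Fin n₂) |
            ∃ t : ℝ, 0 ≤ t ∧ dist (x + t • v) x' ≤ τ} ≤
          ENNReal.ofReal ((c * τ / D) ^ (n₂ - 1)) * coneMeasure n₂ Set.univ := by
  refine ⟨8, by norm_num, fun n hn x x' τ D hτ hτD hD => ?_⟩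
  have hxx' : x ≠ x' := by rintro rfl; rw [dist_self] at hD; linarith
  have hDpos : 0 < D := by linarith
  have hdim : finrank ℝ (EuclideanSpace ℝ (Fin n)) - 1 = n - 1 := by
    rw [finrank_euclideanSpace_fin]
  have hratio : 2 * (2 * (2 * τ / D)) ^ (n - 1) ≤ (8 * τ / D) ^ (n - 1) :=
    calc 2 * (2 * (2 * τ / D)) ^ (n - 1) ≤ 2 ^ (n - 1) * (2 * (2 * τ / D)) ^ (n - 1) := by
          gcongr
          exact le_self_pow₀ one_le_two (by omega)
      _ = (8 * τ / D) ^ (n - 1) := by rw [← mul_pow]; ring_nf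
  set B := ball (0 : EuclideanSpace ℝ (Fin n)) 1
  calc coneMeasure n {v | ∃ t : ℝ, 0 ≤ t ∧ dist (x + t • v) x' ≤ τ}
      ≤ n * volume ((ℝ ∙ (x' - x)).cylinder 1 (2 * τ / D)) := by
        rw [coneMeasure, ← hD]
        gcongr
        exact subset_cylinder_of_ray_near hxx' τ
    _ ≤ n * (ENNReal.ofReal (2 * (2 * (2 * τ / D)) ^ (n - 1)) * volume B) := by
        rw [← hdim]
        gcongr
        exact volume_cylinder_span_singleton_le (sub_ne_zero.2 hxx'.symm) (by positivity)
    _ ≤ n * (ENNReal.ofReal ((8 * τ / D) ^ (n - 1)) * volume B) := by gcongr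
    _ = ENNReal.ofReal ((8 * τ / D) ^ (n - 1)) * coneMeasure n Set.univ := by
        rw [coneMeasure_univ]
        ring
end

section
/- In the two-cluster example where class A is uniform on the segment [0, D] × {0} ⊂ R², with m i.i.d. training samples from class A, the probability that a fresh test point x ∈ [0, D] × {0} has no training point within distance τ ≤ D is, averaged over x, equal to (1/(m+1)) · [ 2(1 − τ/D)^{m+1} + (m−1) · 1_{τ ≤ D/2} · (1 − 2τ/D)^{m+1} ]. -/
/-!
Rescaling by `D` reduces the claim to the unit segment with `t = τ / D`. There the integrand is
symmetric about `1 / 2`, so the integral is twice the one over `[1 / 2, 1]`. With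
`k = max t (1 - t)` and `r = max (1 - 2t) 0`, the uncovered length `1 - nbdLength t u` equals the
constant `r` on `[1 / 2, k]` and `u - t` on `[k, 1]`, giving
`2 ((k - 1 / 2) r ^ m + ((1 - t) ^ (m + 1) - r ^ (m + 1)) / (m + 1))`; finally
`(k - 1 / 2) r ^ m = r ^ (m + 1) / 2`, which for `r = 0` needs `m ≥ 1`.
-/

open MeasureTheory intervalIntegral

/-- `|nbd_u(t)|` for the unit segment: the length of `[u - t, u + t] ∩ [0, 1]`. -/
def nbdLength (t u : ℝ) : ℝ := min (u + t) 1 - max (u - t) 0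

lemma nbdLength_div (D τ x : ℝ) (hD : 0 < D) :
    (min (x + τ) D - max (x - τ) 0) / D = nbdLength (τ / D) (x / D) := by
  rw [nbdLength, sub_div, ← min_div_div_right hD.le, ← max_div_div_right hD.le, div_self hD.ne',
    zero_div, add_div, sub_div]

lemma nbdLength_one_sub (t u : ℝ) : nbdLength t (1 - u) = nbdLength t u := by
  unfold nbdLength
  grind

lemma one_sub_nbdLength_of_le (t u : ℝ) (htu : t ≤ u) (hu : 1 - t ≤ u) :
    1 - nbdLength t u = u - t := by
  rw [nbdLength, min_eq_right (by linarith), max_eq_left (by linarith)]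
  ring

lemma one_sub_nbdLength_of_half_le (t u : ℝ) (hu : 1 / 2 ≤ u) (hut : u ≤ max t (1 - t)) :
    1 - nbdLength t u = max (1 - 2 * t) 0 := by
  unfold nbdLength
  rcases le_total t (1 / 2) with h | h
  · rw [max_eq_right (by linarith)] at hut
    rw [min_eq_left (by linarith), max_eq_left (by linarith), max_eq_left (by linarith)]
    ring
  · rw [max_eq_left (by linarith)] at hut
    rw [min_eq_right (by linarith), max_eq_right (by linarith), max_eq_right (by linarith)]
    ring

theorem integral_eq_two_mul_integral_of_symm {f : ℝ → ℝ} {a b : ℝ}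
    (hf : IntervalIntegrable f volume a b) (hsymm : ∀ x, f (a + b - x) = f x) :
    ∫ x in a..b, f x = 2 * ∫ x in (a + b) / 2..b, f x := by
  have hmid : (a + b) / 2 ∈ Set.uIcc a b := by
    rcases le_total a b with h | h
    · rw [Set.uIcc_of_le h]; constructor <;> linarith
    · rw [Set.uIcc_of_ge h]; constructor <;> linarith
  have hleft : ∫ x in a..(a + b) / 2, f x = ∫ x in (a + b) / 2..b, f x :=
    calc ∫ x in a..(a + b) / 2, f x = ∫ x in a..(a + b) / 2, f (a + b - x) := by
          simp only [hsymm]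
      _ = ∫ x in (a + b) / 2..b, f x := by
          rw [integral_comp_sub_left f (a + b)]; congr 1 <;> ring
  rw [← integral_add_adjacent_intervals (hf.mono_set (Set.uIcc_subset_uIcc_left hmid))
    (hf.mono_set (Set.uIcc_subset_uIcc_right hmid)), hleft, two_mul]

theorem integral_sub_pow (a b c : ℝ) (m : ℕ) :
    ∫ x in a..b, (x - c) ^ m = ((b - c) ^ (m + 1) - (a - c) ^ (m + 1)) / (m + 1) := by
  rw [integral_comp_sub_right (fun x => x ^ m), integral_pow]

theorem integral_one_sub_nbdLength_pow (t : ℝ) (m : ℕ) (ht₀ : 0 ≤ t) (ht₁ : t ≤ 1)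
    (hm : 1 ≤ m) :
    ∫ u in (0 : ℝ)..1, (1 - nbdLength t u) ^ m =
      (2 * (1 - t) ^ (m + 1) + ((m : ℝ) - 1) * max (1 - 2 * t) 0 ^ (m + 1)) / (m + 1) := by
  set k := max t (1 - t)
  set r := max (1 - 2 * t) 0
  have hk : 1 / 2 ≤ k ∧ k ≤ 1 :=
    ⟨by linarith [le_max_left t (1 - t), le_max_right t (1 - t)], max_le ht₁ (by linarith)⟩
  obtain ⟨hkt, hmiddle⟩ : k - t = r ∧ (k - 1 / 2) * r ^ m = r ^ (m + 1) / 2 := by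
    simp only [k, r]
    rcases le_total t (1 / 2) with h | h
    · rw [max_eq_right (by linarith : t ≤ 1 - t), max_eq_left (by linarith : 0 ≤ 1 - 2 * t)]
      constructor <;> ring
    · rw [max_eq_left (by linarith : 1 - t ≤ t), max_eq_right (by linarith : 1 - 2 * t ≤ 0),
        zero_pow (by omega), zero_pow (by omega)]
      constructor <;> ring
  have hint (a b : ℝ) : IntervalIntegrable (fun u => (1 - nbdLength t u) ^ m) volume a b := by
    unfold nbdLength
    exact Continuous.intervalIntegrable (by fun_prop) a b
  have hconst : ∫ u in 1 / 2..k, (1 - nbdLength t u) ^ m = (k - 1 / 2) * r ^ m := by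
    rw [integral_congr (g := fun _ => r ^ m), intervalIntegral.integral_const, smul_eq_mul]
    intro u hu
    rw [Set.uIcc_of_le hk.1] at hu
    simp only [one_sub_nbdLength_of_half_le t u hu.1 hu.2, r]
  have hedge : ∫ u in k..1, (1 - nbdLength t u) ^ m =
      ((1 - t) ^ (m + 1) - r ^ (m + 1)) / (m + 1) := by
    rw [integral_congr (g := fun u => (u - t) ^ m), integral_sub_pow, hkt]
    intro u hu
    rw [Set.uIcc_of_le hk.2] at hu
    simp only [one_sub_nbdLength_of_le t u ((le_max_left _ _).trans hu.1)
      ((le_max_right _ _).trans hu.1)]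
  rw [integral_eq_two_mul_integral_of_symm (hint 0 1)
      (fun u => by rw [zero_add, nbdLength_one_sub]), zero_add,
    ← integral_add_adjacent_intervals (hint _ k) (hint k 1), hconst, hedge, hmiddle]
  field_simp
  ring

/-- Exact abstention rate in the one-dimensional cluster example: for a test point `x`
uniform on `[0, D]` and `m` i.i.d. uniform training points, the probability that no
training point is within distance `τ ≤ D` of `x`, averaged over `x`, equals
`(1/(m+1)) [2(1-τ/D)^{m+1} + (m-1) 1_{τ ≤ D/2} (1-2τ/D)^{m+1}]`.  The neighborhood of `x`
inside the segment has length `min(x+τ, D) - max(x-τ, 0)`. -/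
theorem abstention_rate_two_cluster (D τ : ℝ) (m : ℕ)
    (hD : 0 < D) (hτ : 0 < τ) (hτD : τ ≤ D) (hm : 1 ≤ m) :
    (1 / D) * ∫ x in (0 : ℝ)..D, (1 - (min (x + τ) D - max (x - τ) 0) / D) ^ m =
      (1 / ((m : ℝ) + 1)) * (2 * (1 - τ / D) ^ (m + 1) +
        ((m : ℝ) - 1) * (if τ ≤ D / 2 then (1 - 2 * τ / D) ^ (m + 1) else 0)) := by
  have hmax : max (1 - 2 * (τ / D)) 0 ^ (m + 1) =
      if τ ≤ D / 2 then (1 - 2 * τ / D) ^ (m + 1) else 0 := by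
    rw [← mul_div_assoc]
    split_ifs with h
    · exact congrArg (· ^ (m + 1)) (max_eq_left (by rw [sub_nonneg, div_le_one hD]; linarith))
    · rw [max_eq_right (by rw [sub_nonpos, one_le_div hD]; linarith), zero_pow (by omega)]
  simp only [nbdLength_div D τ _ hD]
  rw [integral_comp_div (fun x => (1 - nbdLength (τ / D) x) ^ m) hD.ne', smul_eq_mul,
    zero_div, div_self hD.ne', ← mul_assoc, one_div_mul_cancel hD.ne', one_mul,
    integral_one_sub_nbdLength_pow (τ / D) m (div_nonneg hτ.le hD.le) ((div_le_one hD).2 hτD) hm, hmax,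
    div_eq_inv_mul, one_div]
end
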